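/- In the doubled BPA game \bar{Δ} (where each symbol X has a twin X' such that twins follow the same rules except that X' → ε rules are replaced by self-loops X' → X', and rules X → YZ give X' → YZ'), if X ∈ W_Diamond(T_ε,<1) then X' ∈ W_Diamond(T,<1). -/

import Mathlib

open scoped Classical

/-- A stochastic BPA game: finite stack alphabet `Γ`, rules `X → α` with
`|α| ≤ 2`, symbols partitioned among player Box, player Diamond, and
probabilistic symbols, the latter carrying positive rational distributions
over their rules. -/
structure BPA (Γ : Type*) [Fintype Γ] where
  rule : Γ → List Γ → Prop
  rule_len : ∀ X α, rule X α → α.length ≤ 2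
  rule_total : ∀ X, ∃ α, rule X α
  isBox : Γ → Prop
  isDiamond : Γ → Prop
  isCirc : Γ → Prop
  cover : ∀ X, isBox X ∨ isDiamond X ∨ isCirc X
  disjBD : ∀ X, ¬ (isBox X ∧ isDiamond X)
  disjBC : ∀ X, ¬ (isBox X ∧ isCirc X)
  disjDC : ∀ X, ¬ (isDiamond X ∧ isCirc X)
  prob : Γ → List Γ → ℝ
  prob_nonneg : ∀ X α, 0 ≤ prob X α
  prob_rat : ∀ X α, ∃ q : ℚ, prob X α = (q : ℝ)
  prob_supp : ∀ X α, isCirc X → (0 < prob X α ↔ rule X α)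
  prob_sum : ∀ X, isCirc X → ∑' α, prob X α = 1

variable {Γ : Type*} [Fintype Γ]

/-- A history-dependent randomized strategy for the player owning the symbols
satisfying `own` in the stochastic game induced by a BPA game: to every history
(sequence of configurations) and current configuration `X :: β` with `own X`,
it assigns a probability distribution on the applicable rules. -/
structure BPA.Strat (Δ : BPA Γ) (own : Γ → Prop) where
  f : List (List Γ) → List Γ → List Γ → ℝ
  nonneg : ∀ w c α, 0 ≤ f w c α
  supp : ∀ w X β α, own X → f w (X :: β) α ≠ 0 → Δ.rule X α
  sum_one : ∀ w X β, own X → ∑' α, f w (X :: β) α = 1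

/-- The distribution on rules chosen at configuration `c` after history `w`. -/
noncomputable def BPA.choice (Δ : BPA Γ) (σ : Δ.Strat Δ.isBox)
    (π : Δ.Strat Δ.isDiamond) (w : List (List Γ)) (c : List Γ) (α : List Γ) : ℝ :=
  match c with
  | [] => 0
  | X :: _ => if Δ.isBox X then σ.f w c α else if Δ.isDiamond X then π.f w c α
      else Δ.prob X α

/-- One-step transition probability between configurations in the play
induced by a BPA game (the empty configuration `ε` loops with probability 1,
and `X :: β` moves to `α ++ β` for a rule `X → α`). -/
noncomputable def BPA.stepP (Δ : BPA Γ) (σ : Δ.Strat Δ.isBox)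
    (π : Δ.Strat Δ.isDiamond) (w : List (List Γ)) (c c' : List Γ) : ℝ :=
  match c with
  | [] => if c' = [] then 1 else 0
  | X :: β => ∑' α : List Γ,
      if α ++ β = c' ∧ Δ.rule X α then Δ.choice σ π w (X :: β) α else 0

/-- Probability of reaching `T` from configuration `c` within at most `n`
transitions, after history `w`. -/
noncomputable def BPA.reachN (Δ : BPA Γ) (σ : Δ.Strat Δ.isBox)
    (π : Δ.Strat Δ.isDiamond) (T : Set (List Γ)) :
    ℕ → List (List Γ) → List Γ → ℝ
  | 0, _, c => if c ∈ T then 1 else 0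
  | n+1, w, c => if c ∈ T then 1 else
      ∑' c', Δ.stepP σ π w c c' * BPA.reachN Δ σ π T n (w ++ [c]) c'

/-- Probability `P_c^{σ,π}(Reach(T))` of reaching `T` from configuration `c`. -/
noncomputable def BPA.reachP (Δ : BPA Γ) (σ : Δ.Strat Δ.isBox)
    (π : Δ.Strat Δ.isDiamond) (T : Set (List Γ)) (c : List Γ) : ℝ :=
  ⨆ n, Δ.reachN σ π T n [] c

/-- The winning region `W_Box(T, >0)`. -/
def BPA.WBoxPos (Δ : BPA Γ) (T : Set (List Γ)) : Set (List Γ) :=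
  {c | ∃ σ : Δ.Strat Δ.isBox, ∀ π : Δ.Strat Δ.isDiamond, 0 < Δ.reachP σ π T c}

/-- The winning region `W_Box(T, =1)`. -/
def BPA.WBoxOne (Δ : BPA Γ) (T : Set (List Γ)) : Set (List Γ) :=
  {c | ∃ σ : Δ.Strat Δ.isBox, ∀ π : Δ.Strat Δ.isDiamond, Δ.reachP σ π T c = 1}

/-- The winning region `W_Diamond(T, =0)`. -/
def BPA.WDiaZero (Δ : BPA Γ) (T : Set (List Γ)) : Set (List Γ) :=
  {c | ∃ π : Δ.Strat Δ.isDiamond, ∀ σ : Δ.Strat Δ.isBox, Δ.reachP σ π T c = 0}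

/-- The winning region `W_Diamond(T, <1)`. -/
def BPA.WDiaLtOne (Δ : BPA Γ) (T : Set (List Γ)) : Set (List Γ) :=
  {c | ∃ π : Δ.Strat Δ.isDiamond, ∀ σ : Δ.Strat Δ.isBox, Δ.reachP σ π T c < 1}

/-- The language `{[X] : X ∈ S}` of one-letter words over a set of symbols. -/
def symLang (S : Set Γ) : Language Γ := {c | ∃ X ∈ S, c = [X]}

/-- The simple set of target configurations `S·Γ*` determined by the set of
symbols `S`: membership depends only on the top stack symbol, and `ε ∉ S·Γ*`. -/
def topLang (S : Set Γ) : Language Γ := {c | ∃ X β, c = X :: β ∧ X ∈ S}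


/-- `Δ` is in special normal form with respect to the set `ΓT` of target
symbols. -/
def BPA.SNF (Δ : BPA Γ) (ΓT : Set Γ) : Prop :=
  (∀ R ∈ ΓT, Δ.isCirc R ∧ ∀ α, Δ.rule R α ↔ α = [R]) ∧
  (∀ X α, (Δ.isDiamond X ∨ Δ.isCirc X) → Δ.rule X α → α.length = 1) ∧
  (∀ X, Δ.isBox X →
    ((∀ α, Δ.rule X α → α.length = 1) ∨
     (∀ α, Δ.rule X α ↔ α = ([] : List Γ)) ∨
     (∃ Y Z, ∀ α, Δ.rule X α ↔ α = [Y, Z])))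

/-- `Δb` over `Γ ⊕ Γ` is the doubled game of `Δ`: `Sum.inl X` plays the role
of `X` and `Sum.inr X` the role of its twin `X'`, with the rules `X' → X'`
replacing `X → ε`, `X' → Y'` replacing `X → Y`, and `X' → Y Z'` replacing
`X → YZ`; ownership and probabilities are inherited. -/
def IsDoubling (Δb : BPA (Γ ⊕ Γ)) (Δ : BPA Γ) : Prop :=
  (∀ X : Γ,
    (Δb.isBox (Sum.inl X) ↔ Δ.isBox X) ∧ (Δb.isDiamond (Sum.inl X) ↔ Δ.isDiamond X) ∧
    (Δb.isCirc (Sum.inl X) ↔ Δ.isCirc X) ∧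
    (Δb.isBox (Sum.inr X) ↔ Δ.isBox X) ∧ (Δb.isDiamond (Sum.inr X) ↔ Δ.isDiamond X) ∧
    (Δb.isCirc (Sum.inr X) ↔ Δ.isCirc X)) ∧
  (∀ (X : Γ) (α : List (Γ ⊕ Γ)),
    Δb.rule (Sum.inl X) α ↔ ∃ α₀, Δ.rule X α₀ ∧ α = α₀.map Sum.inl) ∧
  (∀ (X : Γ) (α : List (Γ ⊕ Γ)),
    Δb.rule (Sum.inr X) α ↔ ∃ α₀, Δ.rule X α₀ ∧
      ((α₀ = [] ∧ α = [Sum.inr X]) ∨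
       (∃ Y, α₀ = [Y] ∧ α = [Sum.inr Y]) ∨
       (∃ Y Z, α₀ = [Y, Z] ∧ α = [Sum.inl Y, Sum.inr Z]))) ∧
  (∀ X Y : Γ, Δ.isCirc X →
    Δb.prob (Sum.inl X) [Sum.inl Y] = Δ.prob X [Y] ∧
    Δb.prob (Sum.inr X) [Sum.inr Y] = Δ.prob X [Y])

/-- The target set of the doubled game: configurations whose top symbol is a
target symbol or the twin of a target symbol. -/
def doubledTarget (ΓT : Set Γ) : Set (List (Γ ⊕ Γ)) :=
  {c | ∃ s β, c = s :: β ∧ ((∃ R ∈ ΓT, s = Sum.inl R) ∨ ∃ R ∈ ΓT, s = Sum.inr R)}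


/-!
Diamond plays from `X'` by copying a strategy `π` that witnesses `X ∈ W_Diamond(T_ε,<1)` on
unprimed images. A configuration `γZ'` of the primed play (only the bottom symbol is primed) is
coupled with `γZ`: above the bottom both move alike, and at the bottom `Z' → Y'`, `Z' → YW'`
answer `Z → Y`, `Z → YW`, while the self-loop `Z' → Z'` answers `Z → ε`, after which the unprimed
play has reached `T_ε`. Special normal form makes this matching of rules bijective, so every
Box strategy of the primed play transfers to the unprimed one, and by induction on the horizon
the primed play reaches `T` with at most the probability that the unprimed play reaches `T_ε`.
-/

open Set Function

theorem tsum_indicator_comp_of_bijOn {α β M : Type*} [AddCommMonoid M] [TopologicalSpace M]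
    {s : Set α} {t : Set β} {m : α → β} {f : β → M} (hm : BijOn m s t)
    (hf : support f ⊆ t) :
    ∑' a, s.indicator (f ∘ m) a = ∑' b, f b := by
  rw [← tsum_subtype, ← tsum_subtype_eq_of_support_subset hf]
  exact (hm.equiv m).tsum_eq fun b : t => f b

theorem tsum_mul_le_tsum_mul {ι : Type*} {p f g : ι → ℝ} (hp : 0 ≤ p) (hps : Summable p)
    (hf : 0 ≤ f) (hg : g ≤ 1) (hfg : ∀ i, p i * f i ≤ p i * g i) :
    ∑' i, p i * f i ≤ ∑' i, p i * g i := by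
  have hpf : ∀ i, 0 ≤ p i * f i := fun i => mul_nonneg (hp i) (hf i)
  have hgs : Summable fun i => p i * g i :=
    hps.of_nonneg_of_le (fun i => (hpf i).trans (hfg i))
      fun i => mul_le_of_le_one_right (hp i) (hg i)
  exact Summable.tsum_le_tsum hfg (hgs.of_nonneg_of_le hpf hfg) hgs

namespace BPA

variable {Δ : BPA Γ} {σ : Δ.Strat Δ.isBox} {π : Δ.Strat Δ.isDiamond}

theorem rule_eq_nil_or_singleton_or_pair {X : Γ} {α : List Γ}
    (h : Δ.rule X α) : α = [] ∨ (∃ Y, α = [Y]) ∨ ∃ Y Z, α = [Y, Z] := by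
  match α, Δ.rule_len X α h with
  | [], _ => exact .inl rfl
  | [Y], _ => exact .inr (.inl ⟨Y, rfl⟩)
  | [Y, Z], _ => exact .inr (.inr ⟨Y, Z, rfl⟩)

theorem SNF.not_rule_nil_and_self {ΓT : Set Γ} (hSNF : Δ.SNF ΓT) (X : Γ) :
    ¬ (Δ.rule X [] ∧ Δ.rule X [X]) := by
  rintro ⟨h0, h1⟩
  rcases Δ.cover X with hB | hDC
  · rcases hSNF.2.2 X hB with h | h | ⟨Y, Z, h⟩
    · simpa using h [] h0
    · simpa using (h [X]).1 h1
    · simpa using (h []).1 h0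
  · simpa using hSNF.2.1 X [] hDC h0

theorem choice_cons (w : List (List Γ)) (X : Γ) (β α : List Γ) :
    Δ.choice σ π w (X :: β) α =
      if Δ.isBox X then σ.f w (X :: β) α else if Δ.isDiamond X then π.f w (X :: β) α
      else Δ.prob X α := rfl

theorem choice_nonneg (w : List (List Γ)) (c α : List Γ) : 0 ≤ Δ.choice σ π w c α := by
  cases c with
  | nil => exact le_rfl
  | cons X β =>
    rw [choice_cons]
    split_ifs
    exacts [σ.nonneg .., π.nonneg .., Δ.prob_nonneg ..]

theorem rule_of_choice_ne_zero {w : List (List Γ)} {X : Γ} {β α : List Γ}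
    (h : Δ.choice σ π w (X :: β) α ≠ 0) : Δ.rule X α := by
  rw [choice_cons] at h
  split_ifs at h with hB hD
  · exact σ.supp _ _ _ _ hB h
  · exact π.supp _ _ _ _ hD h
  · have hC : Δ.isCirc X := ((Δ.cover X).resolve_left hB).resolve_left hD
    exact (Δ.prob_supp X α hC).1 ((Δ.prob_nonneg X α).lt_of_ne' h)

theorem choice_eq_zero_of_not_rule {w : List (List Γ)} {X : Γ} {β α : List Γ}
    (h : ¬ Δ.rule X α) : Δ.choice σ π w (X :: β) α = 0 :=
  not_ne_iff.1 (mt rule_of_choice_ne_zero h)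

theorem tsum_choice (w : List (List Γ)) (X : Γ) (β : List Γ) :
    ∑' α, Δ.choice σ π w (X :: β) α = 1 := by
  simp only [choice_cons]
  split_ifs with hB hD
  · exact σ.sum_one w X β hB
  · exact π.sum_one w X β hD
  · exact Δ.prob_sum X (((Δ.cover X).resolve_left hB).resolve_left hD)

theorem summable_choice (w : List (List Γ)) (X : Γ) (β : List Γ) :
    Summable (Δ.choice σ π w (X :: β)) := by
  by_contra h
  simpa [tsum_eq_zero_of_not_summable h] using tsum_choice (σ := σ) (π := π) w X β

theorem stepP_cons_append (w : List (List Γ)) (X : Γ) (β α : List Γ) :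
    Δ.stepP σ π w (X :: β) (α ++ β) = Δ.choice σ π w (X :: β) α := by
  simp only [stepP]
  rw [tsum_eq_single α fun α' hα' => if_neg fun h => hα' (List.append_cancel_right h.1)]
  by_cases hα : Δ.rule X α
  · exact if_pos ⟨rfl, hα⟩
  · rw [if_neg fun h => hα h.2, choice_eq_zero_of_not_rule hα]

theorem support_stepP_cons (w : List (List Γ)) (X : Γ) (β : List Γ) :
    support (Δ.stepP σ π w (X :: β)) ⊆ range (· ++ β) := by
  intro c hc
  by_contra h
  have hne : ∀ α, ¬ (α ++ β = c ∧ Δ.rule X α) := fun α hα => h ⟨α, hα.1⟩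
  exact hc (by simp [stepP, hne])

theorem tsum_stepP_cons_mul (w : List (List Γ)) (X : Γ) (β : List Γ) (F : List Γ → ℝ) :
    ∑' c, Δ.stepP σ π w (X :: β) c * F c =
      ∑' α, Δ.choice σ π w (X :: β) α * F (α ++ β) := by
  rw [← (List.append_left_injective β).tsum_eq
    ((support_mul_subset_left _ _).trans (support_stepP_cons w X β))]
  simp only [stepP_cons_append]

theorem reachN_of_mem {T : Set (List Γ)} {c : List Γ} (h : c ∈ T) (n : ℕ)
    (w : List (List Γ)) :
    Δ.reachN σ π T n w c = 1 := by
  cases n <;> simp [reachN, h]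

theorem reachN_succ_nil {T : Set (List Γ)} (h : [] ∉ T) (n : ℕ) (w : List (List Γ)) :
    Δ.reachN σ π T (n + 1) w [] = Δ.reachN σ π T n (w ++ [[]]) [] := by
  simp [reachN, stepP, h, ite_mul]

theorem reachN_succ_cons {T : Set (List Γ)} {X : Γ} {β : List Γ} (h : X :: β ∉ T) (n : ℕ)
    (w : List (List Γ)) :
    Δ.reachN σ π T (n + 1) w (X :: β) =
      ∑' α, Δ.choice σ π w (X :: β) α *
        Δ.reachN σ π T n (w ++ [X :: β]) (α ++ β) := by
  rw [reachN, if_neg h, tsum_stepP_cons_mul]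

theorem reachN_mem_Icc (T : Set (List Γ)) :
    ∀ n w c, Δ.reachN σ π T n w c ∈ Icc 0 1
  | 0, w, c => by rw [reachN]; split_ifs <;> simp
  | n + 1, w, c => by
    by_cases hc : c ∈ T
    · simp [reachN_of_mem hc]
    cases c with
    | nil => rw [reachN_succ_nil hc]; exact reachN_mem_Icc T n _ _
    | cons X β =>
      rw [reachN_succ_cons hc]
      refine ⟨tsum_nonneg fun _ => mul_nonneg (choice_nonneg ..) (reachN_mem_Icc T n _ _).1,
        ?_⟩
      calc _ ≤ ∑' α, Δ.choice σ π w (X :: β) α * 1 :=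
            tsum_mul_le_tsum_mul (fun _ => choice_nonneg ..) (summable_choice w X β)
              (fun _ => (reachN_mem_Icc T n _ _).1) (fun _ => le_rfl)
              fun α => mul_le_mul_of_nonneg_left (reachN_mem_Icc T n _ _).2 (choice_nonneg ..)
        _ = 1 := by simp [tsum_choice]

variable {Γ' : Type*} [Fintype Γ']

theorem reachP_le_reachP {Δ' : BPA Γ'} {σ' : Δ'.Strat Δ'.isBox}
    {π' : Δ'.Strat Δ'.isDiamond} {T : Set (List Γ)} {T' : Set (List Γ')} {c : List Γ}
    {c' : List Γ'} (h : ∀ n, Δ.reachN σ π T n [] c ≤ Δ'.reachN σ' π' T' n [] c') :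
    Δ.reachP σ π T c ≤ Δ'.reachP σ' π' T' c' :=
  ciSup_mono ⟨1, by rintro _ ⟨n, rfl⟩; exact (reachN_mem_Icc T' n [] c').2⟩ h

def IsRuleCorrespondence (Δ : BPA Γ) (Δ' : BPA Γ') (own : Γ → Prop) (own' : Γ' → Prop)
    (conf : List Γ → List Γ') (m : List Γ → List Γ → List Γ') : Prop :=
  ∀ X β, own X → ∃ Y β', conf (X :: β) = Y :: β' ∧ own' Y ∧
    BijOn (m (X :: β)) {α | Δ.rule X α} {α | Δ'.rule Y α}

namespace Strat

variable {own : Γ → Prop} {own' : Γ' → Prop} {Δ' : BPA Γ'} {conf : List Γ → List Γ'} {m : List Γ → List Γ → List Γ'}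

noncomputable def pullback (τ : Δ'.Strat own') (hist : List (List Γ) → List (List Γ'))
    (hm : IsRuleCorrespondence Δ Δ' own own' conf m) : Δ.Strat own where
  f w c α := match c with
    | [] => 0
    | X :: _ => {α | Δ.rule X α}.indicator (fun α => τ.f (hist w) (conf c) (m c α)) α
  nonneg w c α := by
    cases c with
    | nil => exact le_rfl
    | cons X β => exact indicator_nonneg (fun _ _ => τ.nonneg ..) α
  supp w X β α _ h := by_contra fun hα => h (indicator_of_notMem hα _)
  sum_one w X β hX := by
    obtain ⟨Y, β', hc, hY, hbij⟩ := hm X β hX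
    refine (tsum_indicator_comp_of_bijOn (f := τ.f (hist w) (conf (X :: β))) hbij ?_).trans ?_
    · rw [hc]; exact fun α hα => τ.supp _ _ _ _ hY hα
    · rw [hc, τ.sum_one _ _ _ hY]

theorem pullback_apply_of_rule (τ : Δ'.Strat own') (hist : List (List Γ) → List (List Γ'))
    (hm : IsRuleCorrespondence Δ Δ' own own' conf m) {w : List (List Γ)} {X : Γ}
    {β α : List Γ} (hα : Δ.rule X α) :
    (τ.pullback hist hm).f w (X :: β) α = τ.f (hist w) (conf (X :: β)) (m (X :: β) α) :=
  indicator_of_mem (s := {α | Δ.rule X α}) hα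
    fun α => τ.f (hist w) (conf (X :: β)) (m (X :: β) α)

end Strat

end BPA

namespace Doubling

variable {A : Type*}

def prime : A ⊕ A → A ⊕ A := Sum.elim Sum.inr Sum.inr

def unprime : A ⊕ A → A ⊕ A := Sum.elim Sum.inl Sum.inl

def primeBottom (c : List (A ⊕ A)) : List (A ⊕ A) := c.modifyLast prime

-- The rule of the top of `primeBottom c` matching the rule `α` of the top of `c`; on a
-- one-symbol stack `X → ε` is matched with the self-loop `X' → X'`.
noncomputable def primedRule : List (A ⊕ A) → List (A ⊕ A) → List (A ⊕ A)
  | [s], α => if α = [] then [prime s] else primeBottom α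
  | _, α => α

@[simp] theorem primedRule_singleton (s : A ⊕ A) (α : List (A ⊕ A)) :
    primedRule [s] α = if α = [] then [prime s] else primeBottom α := rfl

@[simp] theorem primedRule_cons_cons (s b : A ⊕ A) (t α : List (A ⊕ A)) :
    primedRule (s :: b :: t) α = α := rfl

@[simp] theorem prime_inl (X : A) : prime (Sum.inl X) = Sum.inr X := rfl
@[simp] theorem prime_inr (X : A) : prime (Sum.inr X) = Sum.inr X := rfl
@[simp] theorem unprime_inl (X : A) : unprime (Sum.inl X) = Sum.inl X := rfl
@[simp] theorem unprime_inr (X : A) : unprime (Sum.inr X) = Sum.inl X := rfl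

@[simp] theorem primeBottom_nil : primeBottom ([] : List (A ⊕ A)) = [] := rfl

@[simp] theorem unprime_prime (s : A ⊕ A) : unprime (prime s) = unprime s := by
  cases s <;> rfl

@[simp] theorem primeBottom_singleton (s : A ⊕ A) : primeBottom [s] = [prime s] := rfl

@[simp] theorem primeBottom_cons_cons (s b : A ⊕ A) (t : List (A ⊕ A)) :
    primeBottom (s :: b :: t) = s :: primeBottom (b :: t) :=
  List.modifyLast_append_of_right_ne_nil prime [s] (b :: t) (List.cons_ne_nil _ _)

theorem primeBottom_cons (s : A ⊕ A) (t : List (A ⊕ A)) :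
    primeBottom (s :: t) = (if t = [] then prime s else s) :: primeBottom t := by
  cases t with
  | nil => rfl
  | cons b u => exact primeBottom_cons_cons s b u

theorem map_unprime_primeBottom (c : List (A ⊕ A)) :
    (primeBottom c).map unprime = c.map unprime := by
  induction c with
  | nil => rfl
  | cons s t ih => rw [primeBottom_cons]; split_ifs <;> simp [ih]

@[simp] theorem map_unprime_map_inl (l : List A) :
    (l.map Sum.inl).map unprime = l.map (Sum.inl (β := A)) := by
  simp [Function.comp_def]

theorem primedRule_append_primeBottom (s : A ⊕ A) (t α : List (A ⊕ A)) (h : α ++ t ≠ []) :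
    primedRule (s :: t) α ++ primeBottom t = primeBottom (α ++ t) := by
  cases t with
  | nil =>
    have hα : α ≠ [] := by simpa using h
    simp [hα]
  | cons b u => exact (List.modifyLast_append_of_right_ne_nil _ _ _ (List.cons_ne_nil _ _)).symm

theorem mem_doubledTarget_cons {S : Set A} {s : A ⊕ A} {β : List (A ⊕ A)} :
    s :: β ∈ doubledTarget S ↔ ∃ R ∈ S, unprime s = Sum.inl R := by
  cases s <;> simp [doubledTarget]

theorem mem_doubledTarget_of_primeBottom {S : Set A} {c : List (A ⊕ A)}
    (h : primeBottom c ∈ doubledTarget S) : c ∈ doubledTarget S := by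
  cases c with
  | nil => simp [doubledTarget] at h
  | cons s t =>
    rw [primeBottom_cons, mem_doubledTarget_cons] at h
    rw [mem_doubledTarget_cons]
    split_ifs at h <;> simpa using h

end Doubling

namespace IsDoubling

open Doubling

variable {Δ : BPA Γ} {ΓT : Set Γ} {Δb : BPA (Γ ⊕ Γ)}

theorem isBox_inr (hDb : IsDoubling Δb Δ) (X : Γ) :
    Δb.isBox (.inr X) ↔ Δb.isBox (.inl X) :=
  (hDb.1 X).2.2.2.1.trans (hDb.1 X).1.symm

theorem isDiamond_inr (hDb : IsDoubling Δb Δ) (X : Γ) :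
    Δb.isDiamond (.inr X) ↔ Δb.isDiamond (.inl X) :=
  (hDb.1 X).2.2.2.2.1.trans (hDb.1 X).2.1.symm

theorem isBox_prime (hDb : IsDoubling Δb Δ) (s : Γ ⊕ Γ) :
    Δb.isBox (prime s) ↔ Δb.isBox s := by
  cases s with
  | inl X => exact hDb.isBox_inr X
  | inr X => rfl

theorem isDiamond_unprime (hDb : IsDoubling Δb Δ) (s : Γ ⊕ Γ) :
    Δb.isDiamond (unprime s) ↔ Δb.isDiamond s := by
  cases s with
  | inl X => rfl
  | inr X => exact (hDb.isDiamond_inr X).symm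

theorem map_unprime_of_rule_inl (hDb : IsDoubling Δb Δ) {X : Γ} {α : List (Γ ⊕ Γ)}
    (h : Δb.rule (.inl X) α) : α.map unprime = α := by
  obtain ⟨α₀, -, rfl⟩ := (hDb.2.1 X α).1 h
  simp

theorem primedRule_of_rule_inr (hDb : IsDoubling Δb Δ) {X : Γ} {α : List (Γ ⊕ Γ)}
    (h : Δb.rule (.inr X) α) : primedRule [.inr X] α = α := by
  obtain ⟨α₀, -, ⟨-, rfl⟩ | ⟨Y, -, rfl⟩ | ⟨Y, Z, -, rfl⟩⟩ := (hDb.2.2.1 X α).1 h <;>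
    simp

theorem rule_inl_iff_of_isDiamond_or_isCirc (hDb : IsDoubling Δb Δ) (hSNF : Δ.SNF ΓT) {X : Γ}
    (hX : Δ.isDiamond X ∨ Δ.isCirc X) {α : List (Γ ⊕ Γ)} :
    Δb.rule (.inl X) α ↔ ∃ Y, Δ.rule X [Y] ∧ α = [.inl Y] := by
  rw [hDb.2.1]
  constructor
  · rintro ⟨α₀, hr, rfl⟩
    match α₀, hSNF.2.1 X α₀ hX hr with
    | [Y], _ => exact ⟨Y, hr, rfl⟩
  · rintro ⟨Y, hr, rfl⟩
    exact ⟨[Y], hr, rfl⟩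

theorem rule_inr_iff_of_isDiamond_or_isCirc (hDb : IsDoubling Δb Δ) (hSNF : Δ.SNF ΓT) {X : Γ}
    (hX : Δ.isDiamond X ∨ Δ.isCirc X) {α : List (Γ ⊕ Γ)} :
    Δb.rule (.inr X) α ↔ ∃ Y, Δ.rule X [Y] ∧ α = [.inr Y] := by
  rw [hDb.2.2.1]
  constructor
  · rintro ⟨α₀, hr, ⟨rfl, -⟩ | ⟨Y, rfl, rfl⟩ | ⟨Y, Z, rfl, -⟩⟩
    · simpa using hSNF.2.1 X [] hX hr
    · exact ⟨Y, hr, rfl⟩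
    · simpa using hSNF.2.1 X _ hX hr
  · rintro ⟨Y, hr, rfl⟩
    exact ⟨[Y], hr, .inr (.inl ⟨Y, rfl, rfl⟩)⟩

theorem bijOn_primedRule_inl (hDb : IsDoubling Δb Δ) (hSNF : Δ.SNF ΓT) (X : Γ) :
    BijOn (primedRule [.inl X]) {α | Δb.rule (.inl X) α} {α | Δb.rule (.inr X) α} := by
  refine ⟨fun α hα => ?_, fun α₁ h₁ α₂ h₂ he => ?_, fun α hα => ?_⟩
  · obtain ⟨α₀, hr, rfl⟩ := (hDb.2.1 X α).1 hα
    refine (hDb.2.2.1 X _).2 ⟨α₀, hr, ?_⟩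
    rcases BPA.rule_eq_nil_or_singleton_or_pair hr with rfl | ⟨Y, rfl⟩ | ⟨Y, Z, rfl⟩ <;>
      simp
  · obtain ⟨β₁, hr₁, rfl⟩ := (hDb.2.1 X α₁).1 h₁
    obtain ⟨β₂, hr₂, rfl⟩ := (hDb.2.1 X α₂).1 h₂
    rcases BPA.rule_eq_nil_or_singleton_or_pair hr₁ with rfl | ⟨Y, rfl⟩ | ⟨Y, Z, rfl⟩ <;>
      rcases BPA.rule_eq_nil_or_singleton_or_pair hr₂ with
        rfl | ⟨Y', rfl⟩ | ⟨Y', Z', rfl⟩ <;>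
      simp_all
    -- both `X → ε` and `X → X` would give `X' → X'`
    all_goals exact hSNF.not_rule_nil_and_self _ ⟨by assumption, by assumption⟩
  · obtain ⟨α₀, hr, ⟨rfl, rfl⟩ | ⟨Y, rfl, rfl⟩ | ⟨Y, Z, rfl, rfl⟩⟩ :=
      (hDb.2.2.1 X α).1 hα
    · exact ⟨[], (hDb.2.1 X _).2 ⟨[], hr, rfl⟩, by simp⟩
    · exact ⟨[.inl Y], (hDb.2.1 X _).2 ⟨[Y], hr, rfl⟩, by simp⟩
    · exact ⟨[.inl Y, .inl Z], (hDb.2.1 X _).2 ⟨[Y, Z], hr, rfl⟩, by simp⟩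

theorem bijOn_primedRule (hDb : IsDoubling Δb Δ) (hSNF : Δ.SNF ΓT) (s : Γ ⊕ Γ)
    (t : List (Γ ⊕ Γ)) :
    BijOn (primedRule (s :: t)) {α | Δb.rule s α}
      {α | Δb.rule (if t = [] then prime s else s) α} := by
  cases t with
  | cons b u => exact bijOn_id _
  | nil =>
    cases s with
    | inl X => exact hDb.bijOn_primedRule_inl hSNF X
    | inr X => exact (bijOn_id _).congr fun α hα => (hDb.primedRule_of_rule_inr hα).symm

theorem bijOn_map_unprime (hDb : IsDoubling Δb Δ) (hSNF : Δ.SNF ΓT) {s : Γ ⊕ Γ}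
    (hs : Δb.isDiamond s) :
    BijOn (List.map unprime) {α | Δb.rule s α} {α | Δb.rule (unprime s) α} := by
  cases s with
  | inl X => exact (bijOn_id _).congr fun α hα => (hDb.map_unprime_of_rule_inl hα).symm
  | inr X =>
    have hX : Δ.isDiamond X ∨ Δ.isCirc X := .inl ((hDb.1 X).2.2.2.2.1.1 hs)
    refine ⟨fun α hα => ?_, fun α₁ h₁ α₂ h₂ he => ?_, fun α hα => ?_⟩
    · obtain ⟨Y, hr, rfl⟩ := (hDb.rule_inr_iff_of_isDiamond_or_isCirc hSNF hX).1 hα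
      exact (hDb.rule_inl_iff_of_isDiamond_or_isCirc hSNF hX).2 ⟨Y, hr, rfl⟩
    · obtain ⟨Y₁, -, rfl⟩ := (hDb.rule_inr_iff_of_isDiamond_or_isCirc hSNF hX).1 h₁
      obtain ⟨Y₂, -, rfl⟩ := (hDb.rule_inr_iff_of_isDiamond_or_isCirc hSNF hX).1 h₂
      simpa using he
    · obtain ⟨Y, hr, rfl⟩ := (hDb.rule_inl_iff_of_isDiamond_or_isCirc hSNF hX).1 hα
      exact ⟨[.inr Y], (hDb.rule_inr_iff_of_isDiamond_or_isCirc hSNF hX).2 ⟨Y, hr, rfl⟩,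
        rfl⟩

theorem isRuleCorrespondence_primeBottom (hDb : IsDoubling Δb Δ) (hSNF : Δ.SNF ΓT) :
    BPA.IsRuleCorrespondence Δb Δb Δb.isBox Δb.isBox primeBottom primedRule :=
  fun s t hs => ⟨_, _, primeBottom_cons s t,
    by split_ifs; exacts [(hDb.isBox_prime s).2 hs, hs], hDb.bijOn_primedRule hSNF s t⟩

theorem isRuleCorrespondence_unprime (hDb : IsDoubling Δb Δ) (hSNF : Δ.SNF ΓT) :
    BPA.IsRuleCorrespondence Δb Δb Δb.isDiamond Δb.isDiamond (List.map unprime)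
      (fun _ => List.map unprime) :=
  fun s _ hs => ⟨_, _, rfl, (hDb.isDiamond_unprime s).2 hs, hDb.bijOn_map_unprime hSNF hs⟩

section Coupling

variable (hDb : IsDoubling Δb Δ) (hSNF : Δ.SNF ΓT) (π : Δb.Strat Δb.isDiamond)
  (σ' : Δb.Strat Δb.isBox)

noncomputable def primedDiamond : Δb.Strat Δb.isDiamond :=
  π.pullback (List.map (List.map unprime)) (hDb.isRuleCorrespondence_unprime hSNF)

noncomputable def unprimedBox : Δb.Strat Δb.isBox :=
  σ'.pullback (List.map primeBottom) (hDb.isRuleCorrespondence_primeBottom hSNF)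

theorem choice_primedRule (hist : List (List Γ)) (X : Γ) (l : List Γ) {α : List (Γ ⊕ Γ)}
    (hα : Δb.rule (.inl X) α) :
    Δb.choice σ' (hDb.primedDiamond hSNF π) (hist.map (primeBottom ∘ List.map .inl))
        (primeBottom (.inl X :: l.map .inl)) (primedRule (.inl X :: l.map .inl) α) =
      Δb.choice (hDb.unprimedBox hSNF σ') π (hist.map (List.map .inl))
        (.inl X :: l.map .inl) α := by
  have hhist : (hist.map (primeBottom ∘ List.map .inl)).map (List.map unprime) =
      hist.map (List.map .inl) := by
    simp [Function.comp_def, map_unprime_primeBottom]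
  cases l with
  | nil =>
    simp only [List.map_nil, primeBottom_cons, primeBottom_nil, if_true, prime_inl,
      BPA.choice_cons, hDb.isBox_inr, hDb.isDiamond_inr]
    split_ifs with hB hD
    · rw [unprimedBox, BPA.Strat.pullback_apply_of_rule _ _ _ hα, List.map_map]
      simp
    · have hX : Δ.isDiamond X ∨ Δ.isCirc X := .inl ((hDb.1 X).2.1.1 hD)
      obtain ⟨Y, hr, rfl⟩ := (hDb.rule_inl_iff_of_isDiamond_or_isCirc hSNF hX).1 hα
      have hr' : Δb.rule (.inr X) [.inr Y] :=
        (hDb.rule_inr_iff_of_isDiamond_or_isCirc hSNF hX).2 ⟨Y, hr, rfl⟩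
      simp only [primedRule_singleton, List.cons_ne_nil, if_false, primeBottom_cons, if_true,
        prime_inl, primeBottom_nil]
      rw [primedDiamond, BPA.Strat.pullback_apply_of_rule _ _ _ hr', hhist]
      rfl
    · have hC : Δ.isCirc X :=
        (hDb.1 X).2.2.1.1 (((Δb.cover _).resolve_left hB).resolve_left hD)
      obtain ⟨Y, -, rfl⟩ := (hDb.rule_inl_iff_of_isDiamond_or_isCirc hSNF (.inr hC)).1 hα
      simp only [primedRule_singleton, List.cons_ne_nil, if_false, primeBottom_cons, if_true,
        prime_inl, primeBottom_nil]
      rw [(hDb.2.2.2 X Y hC).1, (hDb.2.2.2 X Y hC).2]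
  | cons Z l =>
    simp only [List.map_cons, primeBottom_cons_cons, primedRule_cons_cons, BPA.choice_cons]
    split_ifs with hB hD
    · rw [unprimedBox, BPA.Strat.pullback_apply_of_rule _ _ _ hα, List.map_map]
      simp
    · rw [primedDiamond, BPA.Strat.pullback_apply_of_rule _ _ _ hα, hhist,
        hDb.map_unprime_of_rule_inl hα]
      simp [map_unprime_primeBottom, Function.comp_def]
    · rfl

theorem tsum_choice_primeBottom_mul (hist : List (List Γ)) (X : Γ) (l : List Γ)
    (F : List (Γ ⊕ Γ) → ℝ) :
    ∑' α', Δb.choice σ' (hDb.primedDiamond hSNF π) (hist.map (primeBottom ∘ List.map .inl))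
        (primeBottom (.inl X :: l.map .inl)) α' * F α' =
      ∑' α, Δb.choice (hDb.unprimedBox hSNF σ') π (hist.map (List.map .inl))
        (.inl X :: l.map .inl) α * F (primedRule (.inl X :: l.map .inl) α) := by
  have hc : primeBottom (.inl X :: l.map .inl) = _ := primeBottom_cons (.inl X) (l.map .inl)
  have hsupp : support (fun α' => Δb.choice σ' (hDb.primedDiamond hSNF π)
      (hist.map (primeBottom ∘ List.map .inl)) (primeBottom (.inl X :: l.map .inl)) α' *
        F α') ⊆ _ :=
    (support_mul_subset_left _ _).trans fun α' h => BPA.rule_of_choice_ne_zero (hc ▸ h)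
  rw [← tsum_indicator_comp_of_bijOn (hDb.bijOn_primedRule hSNF (.inl X) (l.map .inl)) hsupp]
  congr 1
  funext α
  by_cases hα : α ∈ {α | Δb.rule (.inl X) α}
  · rw [indicator_of_mem hα, Function.comp_apply, hDb.choice_primedRule hSNF π σ' hist X l hα]
  · rw [indicator_of_notMem hα, BPA.choice_eq_zero_of_not_rule hα, zero_mul]

theorem reachN_succ_primeBottom {T : Set (List (Γ ⊕ Γ))} (n : ℕ) (hist : List (List Γ))
    (X : Γ) (l : List Γ) (h : primeBottom (.inl X :: l.map .inl) ∉ T) :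
    Δb.reachN σ' (hDb.primedDiamond hSNF π) T (n + 1) (hist.map (primeBottom ∘ List.map .inl))
        (primeBottom (.inl X :: l.map .inl)) =
      ∑' α, Δb.choice (hDb.unprimedBox hSNF σ') π (hist.map (List.map .inl))
          (.inl X :: l.map .inl) α *
        Δb.reachN σ' (hDb.primedDiamond hSNF π) T n
          (hist.map (primeBottom ∘ List.map .inl) ++ [primeBottom (.inl X :: l.map .inl)])
          (primedRule (.inl X :: l.map .inl) α ++ primeBottom (l.map .inl)) := by
  obtain ⟨s, hc⟩ : ∃ s, primeBottom (.inl X :: l.map .inl) = s :: primeBottom (l.map .inl) :=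
    ⟨_, primeBottom_cons _ _⟩
  rw [hc] at h ⊢
  rw [BPA.reachN_succ_cons h, ← hc, tsum_choice_primeBottom_mul]

theorem reachN_primeBottom_le_reachN (S : Set Γ) (n : ℕ) (hist : List (List Γ)) (l : List Γ) :
    Δb.reachN σ' (hDb.primedDiamond hSNF π) (doubledTarget S) n
        (hist.map (primeBottom ∘ List.map .inl)) (primeBottom (l.map .inl)) ≤
      Δb.reachN (hDb.unprimedBox hSNF σ') π (doubledTarget S ∪ {[]}) n
        (hist.map (List.map .inl)) (l.map .inl) := by
  induction n generalizing hist l with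
  | zero =>
    by_cases hT : primeBottom (l.map .inl) ∈ doubledTarget S
    · rw [BPA.reachN_of_mem hT, BPA.reachN_of_mem (.inl (mem_doubledTarget_of_primeBottom hT))]
    · rw [BPA.reachN, if_neg hT]
      exact (BPA.reachN_mem_Icc ..).1
  | succ n ih =>
    by_cases hε : l.map .inl ∈ doubledTarget S ∪ {[]}
    · rw [BPA.reachN_of_mem hε]
      exact (BPA.reachN_mem_Icc ..).2
    have hT : primeBottom (l.map .inl) ∉ doubledTarget S :=
      fun h => hε (.inl (mem_doubledTarget_of_primeBottom h))
    obtain ⟨X, l, rfl⟩ := l.exists_cons_of_ne_nil (by rintro rfl; exact hε (.inr rfl))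
    rw [List.map_cons] at hε hT ⊢
    rw [hDb.reachN_succ_primeBottom hSNF π σ' n hist X l hT, BPA.reachN_succ_cons hε]
    refine tsum_mul_le_tsum_mul (fun _ => BPA.choice_nonneg ..) (BPA.summable_choice ..)
      (fun _ => (BPA.reachN_mem_Icc ..).1) (fun _ => (BPA.reachN_mem_Icc ..).2) fun α => ?_
    by_cases hα : Δb.rule (.inl X) α
    swap
    · simp [BPA.choice_eq_zero_of_not_rule hα]
    refine mul_le_mul_of_nonneg_left ?_ (BPA.choice_nonneg ..)
    obtain ⟨α₀, -, rfl⟩ := (hDb.2.1 X α).1 hα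
    by_cases hnil : α₀ ++ l = []
    · -- the unprimed play popped its last symbol, which the primed play answers by a self-loop
      have hmem : α₀.map Sum.inl ++ l.map Sum.inl ∈ doubledTarget S ∪ {[]} := .inr (by simp_all)
      rw [BPA.reachN_of_mem hmem]
      exact (BPA.reachN_mem_Icc ..).2
    rw [primedRule_append_primeBottom _ _ _ (by simpa using hnil)]
    simpa using ih (hist ++ [X :: l]) (α₀ ++ l)

end Coupling

end IsDoubling

/-- In the doubled game, if `X ∈ W_Diamond(T_ε,<1)` then `X' ∈ W_Diamond(T,<1)`. -/
theorem doubled_WDiaLtOne {Γ : Type*} [Fintype Γ] (Δ : BPA Γ) (ΓT : Set Γ)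
    (hSNF : Δ.SNF ΓT) (Δb : BPA (Γ ⊕ Γ)) (hDb : IsDoubling Δb Δ) (X : Γ)
    (hX : [Sum.inl X] ∈
        Δb.WDiaLtOne (doubledTarget ΓT ∪ {([] : List (Γ ⊕ Γ))})) :
    [Sum.inr X] ∈ Δb.WDiaLtOne (doubledTarget ΓT) := by
  obtain ⟨π, hπ⟩ := hX
  refine ⟨hDb.primedDiamond hSNF π, fun σ' => ?_⟩
  calc _ ≤ Δb.reachP (hDb.unprimedBox hSNF σ') π (doubledTarget ΓT ∪ {[]}) [Sum.inl X] :=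
        BPA.reachP_le_reachP fun n => hDb.reachN_primeBottom_le_reachN hSNF π σ' ΓT n [] [X]
    _ < 1 := hπ _
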